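/- arXiv:math/9809172 — 2 statements merged into one kernel-verified Lean document; each statement's English description precedes it below -/
import Mathlib

section
/- For every n ≥ 3 and all homogeneous v₁,…,v_n ∈ W, the left-hand side Ψ_n of the n-th A_∞ associativity condition for the maps μ_k (namely Ψ_n(v₁,…,v_n) := ∑_{k+l=n+1, k,l≥1} ∑_{j=0}^{k−1} (−1)^r μ_k(v₁,…,v_j, μ_l(v_{j+1},…,v_{j+l}), v_{j+l+1},…,v_n), with r ≡ l(|v₁|+⋯+|v_j|) + j(l−1) + (k−1)l mod 2) satisfies Ψ_n(v₁,…,v_n) = (1 − [d,Q])(Φ_n(v₁,…,v_n) + Θ_n(v₁,…,v_n)), where Φ_n(v₁,…,v_n) := ∑_{k+l=n+1, k,l≥2} ∑_{j=0}^{k−1} (−1)^r λ_k(v₁,…,v_j, λ_l(v_{j+1},…,v_{j+l}), v_{j+l+1},…,v_n) and Θ_n(v₁,…,v_n) := d λ_n(v₁,…,v_n) + ∑_{j=0}^{n−1} (−1)^{n−1+|v₁|+⋯+|v_j|} λ_n(v₁,…,v_j, dv_{j+1}, v_{j+2},…,v_n) − ∑_{k+l=n+1, k,l≥2} ∑_{j=0}^{k−1}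 (−1)^r λ_k(v₁,…,v_j, [d,Q]λ_l(v_{j+1},…,v_{j+l}), v_{j+l+1},…,v_n). -/
open Finset

/-- The sign `(-1)^x` for a parity `x : ZMod 2`, valued in a ring `A`. -/
def sgn {A : Type*} [Ring A] (x : ZMod 2) : A := (-1 : A) ^ x.val

/-- The sum of the first `j` parities, `|v₁| + ⋯ + |v_j|`. -/
def psum (p : ℕ → ZMod 2) (j : ℕ) : ZMod 2 := ∑ i ∈ Finset.range j, p i

/-- `Qλ_n`, with the convention `Qλ₁ := -Id`. -/
def Qlam {A : Type*} [Neg A] (Q : A → A)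
    (lam : ℕ → (ℕ → A) → (ℕ → ZMod 2) → A) :
    ℕ → (ℕ → A) → (ℕ → ZMod 2) → A
  | 1, v, _ => -(v 0)
  | n, v, p => Q (lam n v p)

/-- The tuple obtained from `v` by replacing the block `v_{j+1}, …, v_{j+l}`
of length `l` by the single element `x` (0-indexed: `x` sits at slot `j`). -/
def insE {A : Type*} (v : ℕ → A) (j l : ℕ) (x : A) : ℕ → A :=
  fun i => if i < j then v i else if i = j then x else v (i + l - 1)

/-- The corresponding tuple of parities, where the inserted element has parity `q`. -/
def insP (p : ℕ → ZMod 2) (j l : ℕ) (q : ZMod 2) : ℕ → ZMod 2 :=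
  fun i => if i < j then p i else if i = j then q else p (i + l - 1)

/-- `Φ_n(v₁,…,v_n) = ∑_{k+l=n+1, k,l≥2} ∑_{j=0}^{k-1} (-1)^r
λ_k(v₁,…,v_j, λ_l(v_{j+1},…,v_{j+l}), v_{j+l+1},…,v_n)`,
with `r = l(|v₁|+⋯+|v_j|) + j(l-1) + (k-1)l`; the inserted element
`λ_l(v_{j+1},…,v_{j+l})` is homogeneous of parity `l + |v_{j+1}| + ⋯ + |v_{j+l}|`. -/
def Phi {A : Type*} [Ring A] (lam : ℕ → (ℕ → A) → (ℕ → ZMod 2) → A)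
    (n : ℕ) (v : ℕ → A) (p : ℕ → ZMod 2) : A :=
  ∑ k ∈ Finset.Icc 2 (n - 1), ∑ j ∈ Finset.range k,
    sgn (((n + 1 - k : ℕ) : ZMod 2) * psum p j
        + (j : ZMod 2) * (((n + 1 - k : ℕ) : ZMod 2) - 1)
        + ((k : ZMod 2) - 1) * ((n + 1 - k : ℕ) : ZMod 2)) *
      lam k
        (insE v j (n + 1 - k)
          (lam (n + 1 - k) (fun i => v (j + i)) (fun i => p (j + i))))
        (insP p j (n + 1 - k)
          (((n + 1 - k : ℕ) : ZMod 2) + ∑ i ∈ Finset.range (n + 1 - k), p (j + i)))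

/-- The operator `P = 1 - [d,Q] = 1 - (dQ + Qd)`. -/
def Pop {A : Type*} [Ring A] (d Q : A → A) (x : A) : A := x - (d (Q x) + Q (d x))

/-- `Θ_m(v₁,…,v_m) = dλ_m(v₁,…,v_m)
+ ∑_{j=0}^{m-1} (-1)^{m-1+|v₁|+⋯+|v_j|} λ_m(v₁,…,v_j, dv_{j+1}, v_{j+2},…,v_m)
- ∑_{k+l=m+1, k,l≥2} ∑_{j=0}^{k-1} (-1)^r λ_k(v₁,…,v_j, [d,Q]λ_l(v_{j+1},…,v_{j+l}), v_{j+l+1},…,v_m)`,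
with `r = l(|v₁|+⋯+|v_j|) + j(l-1) + (k-1)l` and `[d,Q] = dQ + Qd`. -/
def Theta {A : Type*} [Ring A] (d Q : A → A)
    (lam : ℕ → (ℕ → A) → (ℕ → ZMod 2) → A)
    (m : ℕ) (v : ℕ → A) (p : ℕ → ZMod 2) : A :=
  d (lam m v p)
  + ∑ j ∈ Finset.range m,
      sgn (((m - 1 : ℕ) : ZMod 2) + psum p j) *
        lam m (Function.update v j (d (v j))) (Function.update p j (p j + 1))
  - ∑ k ∈ Finset.Icc 2 (m - 1), ∑ j ∈ Finset.range k,
      sgn (((m + 1 - k : ℕ) : ZMod 2) * psum p j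
          + (j : ZMod 2) * (((m + 1 - k : ℕ) : ZMod 2) - 1)
          + ((k : ZMod 2) - 1) * ((m + 1 - k : ℕ) : ZMod 2)) *
        lam k
          (insE v j (m + 1 - k)
            (d (Q (lam (m + 1 - k) (fun i => v (j + i)) (fun i => p (j + i))))
              + Q (d (lam (m + 1 - k) (fun i => v (j + i)) (fun i => p (j + i))))))
          (insP p j (m + 1 - k)
            (((m + 1 - k : ℕ) : ZMod 2) + ∑ i ∈ Finset.range (m + 1 - k), p (j + i)))

/-- `μ₁ := d`, and `μ_k := (1 - [d,Q]) ∘ λ_k` for `k ≥ 2`. -/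
def muF {A : Type*} [Ring A] (d Q : A → A)
    (lam : ℕ → (ℕ → A) → (ℕ → ZMod 2) → A) :
    ℕ → (ℕ → A) → (ℕ → ZMod 2) → A
  | 1, v, _ => d (v 0)
  | k, v, p => Pop d Q (lam k v p)

/-- `Ψ_n(v₁,…,v_n) = ∑_{k+l=n+1, k,l≥1} ∑_{j=0}^{k-1} (-1)^r
μ_k(v₁,…,v_j, μ_l(v_{j+1},…,v_{j+l}), v_{j+l+1},…,v_n)`,
with `r = l(|v₁|+⋯+|v_j|) + j(l-1) + (k-1)l`; the inserted element
`μ_l(v_{j+1},…,v_{j+l})` is homogeneous of parity `l + |v_{j+1}| + ⋯ + |v_{j+l}|`. -/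
def Psi {A : Type*} [Ring A] (d Q : A → A)
    (lam : ℕ → (ℕ → A) → (ℕ → ZMod 2) → A)
    (n : ℕ) (v : ℕ → A) (p : ℕ → ZMod 2) : A :=
  ∑ k ∈ Finset.Icc 1 n, ∑ j ∈ Finset.range k,
    sgn (((n + 1 - k : ℕ) : ZMod 2) * psum p j
        + (j : ZMod 2) * (((n + 1 - k : ℕ) : ZMod 2) - 1)
        + ((k : ZMod 2) - 1) * ((n + 1 - k : ℕ) : ZMod 2)) *
      muF d Q lam k
        (insE v j (n + 1 - k)
          (muF d Q lam (n + 1 - k) (fun i => v (j + i)) (fun i => p (j + i))))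
        (insP p j (n + 1 - k)
          (((n + 1 - k : ℕ) : ZMod 2) + ∑ i ∈ Finset.range (n + 1 - k), p (j + i)))
section Aux
variable {K A : Type*} [Field K] [Ring A] [Algebra K A]

lemma muF_ne_one (d Q : A → A) (lam : ℕ → (ℕ → A) → (ℕ → ZMod 2) → A)
    {k : ℕ} (hk : k ≠ 1) (v : ℕ → A) (p : ℕ → ZMod 2) :
    muF d Q lam k v p = Pop d Q (lam k v p) := by
  match k, hk with
  | 0, _ => rfl
  | (m+2), _ => rfl

lemma muF_one (d Q : A → A) (lam : ℕ → (ℕ → A) → (ℕ → ZMod 2) → A)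
    (v : ℕ → A) (p : ℕ → ZMod 2) : muF d Q lam 1 v p = d (v 0) := rfl

lemma Qlam_one (Q : A → A) (lam : ℕ → (ℕ → A) → (ℕ → ZMod 2) → A)
    (v : ℕ → A) (p : ℕ → ZMod 2) : Qlam Q lam 1 v p = -(v 0) := rfl

lemma Qlam_ne_one (Q : A → A) (lam : ℕ → (ℕ → A) → (ℕ → ZMod 2) → A)
    {k : ℕ} (hk : k ≠ 1) (v : ℕ → A) (p : ℕ → ZMod 2) :
    Qlam Q lam k v p = Q (lam k v p) := by
  match k, hk with
  | 0, _ => rfl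
  | (m+2), _ => rfl

lemma sgn_mul_linear (f : A →ₗ[K] A) (r : ZMod 2) (x : A) :
    f (sgn r * x) = sgn r * f x := by
  have : r.val = 0 ∨ r.val = 1 := by have := ZMod.val_lt r; omega
  rcases this with h | h <;> simp [sgn, h, map_neg]

lemma insE_eq_update (v : ℕ → A) (j l : ℕ) (x : A) :
    insE v j l x = Function.update (insE v j l 0) j x := by
  funext i
  by_cases h1 : i < j
  · simp [insE, Function.update, h1, Nat.ne_of_lt h1]
  · by_cases h2 : i = j
    · subst h2; simp [insE, Function.update]
    · simp [insE, Function.update, h1, h2]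
end Aux
section Aux2
variable {K A : Type*} [Field K] [Ring A] [Algebra K A]
variable (Q : A →ₗ[K] A) (lam : ℕ → (ℕ → A) → (ℕ → ZMod 2) → A)
variable (hlam2 : ∀ (v : ℕ → A) (p : ℕ → ZMod 2), lam 2 v p = v 0 * v 1)
variable (hlamrec : ∀ n, 3 ≤ n → ∀ (v : ℕ → A) (p : ℕ → ZMod 2),
      lam n v p =
        - ∑ k ∈ Finset.Icc 1 (n - 1),
            sgn ((k : ZMod 2) + (((n - k : ℕ) : ZMod 2) - 1) * psum p k) *
              (Qlam (⇑Q) lam k v p *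
                Qlam (⇑Q) lam (n - k) (fun i => v (k + i)) (fun i => p (k + i))))

include hlam2 hlamrec in
lemma lam_congr :
    ∀ m, 2 ≤ m → ∀ (v w : ℕ → A) (p : ℕ → ZMod 2),
      (∀ i < m, v i = w i) → lam m v p = lam m w p := by
  intro m
  induction m using Nat.strong_induction_on with
  | _ m IH =>
    intro hm v w p hvw
    rcases eq_or_lt_of_le hm with h2 | h3
    · subst h2
      rw [hlam2, hlam2, hvw 0 (by omega), hvw 1 (by omega)]
    · rw [hlamrec m h3, hlamrec m h3]
      congr 1
      apply Finset.sum_congr rfl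
      intro k hk
      simp only [Finset.mem_Icc] at hk
      congr 1
      have hfst : Qlam (⇑Q) lam k v p = Qlam (⇑Q) lam k w p := by
        rcases eq_or_lt_of_le hk.1 with h1 | h2'
        · rw [← h1, Qlam_one, Qlam_one, hvw 0 (by omega)]
        · rw [Qlam_ne_one _ _ (by omega : k ≠ 1), Qlam_ne_one _ _ (by omega : k ≠ 1)]
          exact congrArg Q (IH k (by omega) (by omega) v w p (fun i hi => hvw i (by omega)))
      rw [hfst]
      congr 1
      rcases Nat.lt_or_ge 1 (m - k) with h2' | h1
      · rw [Qlam_ne_one _ _ (by omega : m - k ≠ 1), Qlam_ne_one _ _ (by omega : m - k ≠ 1)]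
        exact congrArg Q (IH (m - k) (by omega) (by omega) _ _ _
          (fun i hi => hvw (k + i) (by omega)))
      · have h1' : m - k = 1 := by omega
        rw [h1', Qlam_one, Qlam_one, hvw (k + 0) (by omega)]

include hlam2 hlamrec in
lemma lam_upd_sub :
    ∀ m, 2 ≤ m → ∀ j, j < m → ∀ (v : ℕ → A) (p : ℕ → ZMod 2) (x y : A),
      lam m (Function.update v j (x - y)) p
        = lam m (Function.update v j x) p - lam m (Function.update v j y) p := by
  intro m
  induction m using Nat.strong_induction_on with
  | _ m IH =>
    intro hm j hj v p x y
    rcases eq_or_lt_of_le hm with h2 | h3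
    · subst h2
      rw [hlam2, hlam2, hlam2]
      interval_cases j <;>
        simp [Function.update_self, Function.update_of_ne, sub_mul, mul_sub]
    · rw [hlamrec m h3, hlamrec m h3, hlamrec m h3]
      have step : ∀ F G H : A, F = G - H → -F = -G - -H := by
        intro F G H h; rw [h]; noncomm_ring
      apply step
      rw [← Finset.sum_sub_distrib]
      apply Finset.sum_congr rfl
      intro k hk
      simp only [Finset.mem_Icc] at hk
      by_cases hjk : j < k
      · have hB : ∀ z : A, (fun i => Function.update v j z (k + i)) = (fun i => v (k + i)) := by
          intro z; funext i; exact Function.update_of_ne (by omega) _ _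
        simp only [hB]
        rcases eq_or_lt_of_le hk.1 with h1 | h2'
        · subst h1
          have hj0 : j = 0 := by omega
          subst hj0
          simp only [Qlam_one, Function.update_self]
          noncomm_ring
        · simp only [Qlam_ne_one _ _ (by omega : k ≠ 1)]
          rw [IH k (by omega) (by omega) j hjk v p x y, map_sub]
          noncomm_ring
      · have hA : ∀ z : A, Qlam (⇑Q) lam k (Function.update v j z) p = Qlam (⇑Q) lam k v p := by
          intro z
          rcases eq_or_lt_of_le hk.1 with h1 | h2'
          · rw [← h1, Qlam_one, Qlam_one, Function.update_of_ne (by omega) _ _]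
          · rw [Qlam_ne_one _ _ (by omega : k ≠ 1), Qlam_ne_one _ _ (by omega : k ≠ 1)]
            exact congrArg Q (lam_congr Q lam hlam2 hlamrec k (by omega) _ _ p
              (fun i hi => Function.update_of_ne (by omega) _ _))
        simp only [hA]
        have hfun : ∀ z : A, (fun i => Function.update v j z (k + i))
            = Function.update (fun i => v (k + i)) (j - k) z := by
          intro z; funext i
          by_cases h : i = j - k
          · subst h
            rw [Function.update_self, show k + (j - k) = j by omega, Function.update_self]
          · rw [Function.update_of_ne (by omega) _ _, Function.update_of_ne h _ _]
        simp only [hfun]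
        rcases Nat.lt_or_ge 1 (m - k) with h2' | h1
        · simp only [Qlam_ne_one _ _ (by omega : m - k ≠ 1)]
          rw [IH (m - k) (by omega) (by omega) (j - k) (by omega) _ _ x y, map_sub]
          noncomm_ring
        · have hmk : m - k = 1 := by omega
          have hjk0 : j - k = 0 := by omega
          simp only [hmk, hjk0, Qlam_one, Function.update_self]
          noncomm_ring

include hlam2 hlamrec in
lemma lam_insE_sub (m : ℕ) (hm : 2 ≤ m) (j : ℕ) (hj : j < m) (v : ℕ → A) (l : ℕ)
    (q : ℕ → ZMod 2) (x y : A) :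
    lam m (insE v j l (x - y)) q = lam m (insE v j l x) q - lam m (insE v j l y) q := by
  rw [insE_eq_update v j l (x - y), insE_eq_update v j l x, insE_eq_update v j l y,
    lam_upd_sub Q lam hlam2 hlamrec m hm j hj]
end Aux2


/-- for every `n ≥ 3` and all homogeneous `v₁, …, v_n ∈ W`,
`Ψ_n(v₁,…,v_n) = (1 - [d,Q])(Φ_n(v₁,…,v_n) + Θ_n(v₁,…,v_n))`. -/
theorem psi_eq_P_phi_add_theta {K A : Type*} [Field K] [Ring A] [Algebra K A]
    -- `A` is a superalgebra over `K`: a ℤ/2-graded associative algebra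
    (𝒜 : ZMod 2 → Submodule K A) [GradedAlgebra 𝒜]
    -- `Q` is an odd linear operator
    (Q : A →ₗ[K] A)
    (hQ : ∀ (i : ZMod 2), ∀ x ∈ 𝒜 i, Q x ∈ 𝒜 (i + 1))
    -- `d` is an odd linear map with `d² = 0` satisfying the Leibniz rule
    (d : A →ₗ[K] A)
    (hd : ∀ (i : ZMod 2), ∀ x ∈ 𝒜 i, d x ∈ 𝒜 (i + 1))
    (hd2 : ∀ x : A, d (d x) = 0)
    (hleib : ∀ (i j : ZMod 2) (a b : A), a ∈ 𝒜 i → b ∈ 𝒜 j →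
      d (a * b) = d a * b + sgn i * (a * d b))
    -- `W` is a `d`-invariant subspace, and `(1 - [d,Q]) v ∈ W` for all `v`
    (W : Submodule K A)
    (hWd : ∀ w ∈ W, d w ∈ W)
    (hPW : ∀ x : A, Pop (⇑d) (⇑Q) x ∈ W)
    -- `λ₂(v₁,v₂) = v₁·v₂` and, recursively, `λ_n(v₁,…,v_n) =
    -- -∑ (-1)^{k+(l-1)(|v₁|+⋯+|v_k|)} [Qλ_k(v₁,…,v_k)]·[Qλ_l(v_{k+1},…,v_n)]`
    -- for `n ≥ 3`, with `Qλ₁ := -Id`; here the sum runs over all splittings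
    -- `(v₁,…,v_k), (v_{k+1},…,v_n)` with `k, l ≥ 1` (so `l = n - k`, matching
    -- the arities in the paper's explicit formulae for `λ₃, λ₄, λ₅`)
    (lam : ℕ → (ℕ → A) → (ℕ → ZMod 2) → A)
    (hlam2 : ∀ (v : ℕ → A) (p : ℕ → ZMod 2), lam 2 v p = v 0 * v 1)
    (hlamrec : ∀ n, 3 ≤ n → ∀ (v : ℕ → A) (p : ℕ → ZMod 2),
      lam n v p =
        - ∑ k ∈ Finset.Icc 1 (n - 1),
            sgn ((k : ZMod 2) + (((n - k : ℕ) : ZMod 2) - 1) * psum p k) *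
              (Qlam (⇑Q) lam k v p *
                Qlam (⇑Q) lam (n - k) (fun i => v (k + i)) (fun i => p (k + i))))
    (n : ℕ) (hn : 3 ≤ n) (v : ℕ → A) (p : ℕ → ZMod 2)
    -- `v₁, …, v_n` are homogeneous elements of `W`, `v_i` of parity `p_i`
    (hvW : ∀ i < n, v i ∈ W) (hv : ∀ i < n, v i ∈ 𝒜 (p i)) :
    Psi (⇑d) (⇑Q) lam n v p =
      Pop (⇑d) (⇑Q) (Phi lam n v p + Theta (⇑d) (⇑Q) lam n v p) := by
  classical
  set P : A →ₗ[K] A := LinearMap.id - (d ∘ₗ Q + Q ∘ₗ d) with hPdef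
  have hP : ∀ x : A, Pop (⇑d) (⇑Q) x = P x := by
    intro x
    simp [Pop, hPdef, LinearMap.sub_apply, LinearMap.add_apply, LinearMap.comp_apply]
  have hPsgn : ∀ (r : ZMod 2) (x : A), P (sgn r * x) = sgn r * P x :=
    fun r x => sgn_mul_linear P r x
  have hmu : ∀ (k : ℕ), k ≠ 1 → ∀ (w : ℕ → A) (q : ℕ → ZMod 2),
      muF (⇑d) (⇑Q) lam k w q = P (lam k w q) := by
    intro k hk w q; rw [muF_ne_one _ _ _ hk, hP]
  have hdP : ∀ x : A, d (P x) = P (d x) := by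
    intro x
    simp [hPdef, LinearMap.sub_apply, LinearMap.add_apply, LinearMap.comp_apply,
      map_sub, map_add, hd2, hd2 x]
  have hsgn0 : sgn (0 : ZMod 2) = (1 : A) := by
    simp [sgn]
  -- the three normal-form pieces
  set PD : A := P (d (lam n v p)) with hPDdef
  set PS2 : A := ∑ j ∈ Finset.range n,
      sgn (((n - 1 : ℕ) : ZMod 2) + psum p j) *
        P (lam n (Function.update v j (d (v j))) (Function.update p j (p j + 1))) with hPS2def
  set PPhi : A := ∑ k ∈ Finset.Icc 2 (n - 1), ∑ j ∈ Finset.range k,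
      sgn (((n + 1 - k : ℕ) : ZMod 2) * psum p j
          + (j : ZMod 2) * (((n + 1 - k : ℕ) : ZMod 2) - 1)
          + ((k : ZMod 2) - 1) * ((n + 1 - k : ℕ) : ZMod 2)) *
        P (lam k
          (insE v j (n + 1 - k)
            (lam (n + 1 - k) (fun i => v (j + i)) (fun i => p (j + i))))
          (insP p j (n + 1 - k)
            (((n + 1 - k : ℕ) : ZMod 2) + ∑ i ∈ Finset.range (n + 1 - k), p (j + i)))) with hPPhidef
  set PS3 : A := ∑ k ∈ Finset.Icc 2 (n - 1), ∑ j ∈ Finset.range k,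
      sgn (((n + 1 - k : ℕ) : ZMod 2) * psum p j
          + (j : ZMod 2) * (((n + 1 - k : ℕ) : ZMod 2) - 1)
          + ((k : ZMod 2) - 1) * ((n + 1 - k : ℕ) : ZMod 2)) *
        P (lam k
          (insE v j (n + 1 - k)
            (d (Q (lam (n + 1 - k) (fun i => v (j + i)) (fun i => p (j + i))))
              + Q (d (lam (n + 1 - k) (fun i => v (j + i)) (fun i => p (j + i))))))
          (insP p j (n + 1 - k)
            (((n + 1 - k : ℕ) : ZMod 2) + ∑ i ∈ Finset.range (n + 1 - k), p (j + i)))) with hPS3def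
  have goalRHS : Pop (⇑d) (⇑Q) (Phi lam n v p + Theta (⇑d) (⇑Q) lam n v p)
      = PPhi + (PD + PS2 - PS3) := by
    rw [hP, Phi, Theta, map_add, map_sub, map_add, map_sum, map_sum, map_sum]
    congr 1
    · rw [hPPhidef]
      refine Finset.sum_congr rfl fun k _ => ?_
      rw [map_sum]
      exact Finset.sum_congr rfl fun j _ => hPsgn _ _
    · congr 1
      · congr 1
        rw [hPS2def]
        exact Finset.sum_congr rfl fun j _ => hPsgn _ _
      · rw [hPS3def]
        refine Finset.sum_congr rfl fun k _ => ?_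
        rw [map_sum]
        exact Finset.sum_congr rfl fun j _ => hPsgn _ _
  rw [goalRHS]
  -- now work on the LHS
  have hsplit : Finset.Icc 1 n = insert 1 (insert n (Finset.Icc 2 (n - 1))) := by
    ext x; simp only [Finset.mem_Icc, Finset.mem_insert]; omega
  rw [Psi, hsplit, Finset.sum_insert (by simp only [Finset.mem_insert, Finset.mem_Icc]; omega),
      Finset.sum_insert (by simp only [Finset.mem_Icc]; omega)]
  have e1 : n + 1 - 1 = n := by omega
  have e2 : (fun i => v (0 + i)) = v := by funext i; rw [Nat.zero_add]
  have e3 : (fun i => p (0 + i)) = p := by funext i; rw [Nat.zero_add]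
  -- the k = 1 block
  have hT1 : (∑ j ∈ Finset.range 1,
      sgn (((n + 1 - 1 : ℕ) : ZMod 2) * psum p j
          + (j : ZMod 2) * (((n + 1 - 1 : ℕ) : ZMod 2) - 1)
          + ((1 : ℕ) - 1 : ZMod 2) * ((n + 1 - 1 : ℕ) : ZMod 2)) *
        muF (⇑d) (⇑Q) lam 1
          (insE v j (n + 1 - 1)
            (muF (⇑d) (⇑Q) lam (n + 1 - 1) (fun i => v (j + i)) (fun i => p (j + i))))
          (insP p j (n + 1 - 1)
            (((n + 1 - 1 : ℕ) : ZMod 2) + ∑ i ∈ Finset.range (n + 1 - 1), p (j + i)))) = PD := by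
    rw [Finset.sum_range_one, e1, e2, e3]
    have harg : ((n : ℕ) : ZMod 2) * psum p 0
        + ((0 : ℕ) : ZMod 2) * (((n : ℕ) : ZMod 2) - 1)
        + ((1 : ℕ) - 1 : ZMod 2) * ((n : ℕ) : ZMod 2) = 0 := by
      simp [psum]
    rw [harg, hsgn0, one_mul]
    rw [muF_one]
    have : insE v 0 n (muF (⇑d) (⇑Q) lam n v p) 0 = muF (⇑d) (⇑Q) lam n v p := by
      simp [insE]
    rw [this, hmu n (by omega), hdP, hPDdef]
  rw [hT1]
  -- the k = n block
  have hT2 : (∑ j ∈ Finset.range n,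
      sgn (((n + 1 - n : ℕ) : ZMod 2) * psum p j
          + (j : ZMod 2) * (((n + 1 - n : ℕ) : ZMod 2) - 1)
          + ((n : ZMod 2) - 1) * ((n + 1 - n : ℕ) : ZMod 2)) *
        muF (⇑d) (⇑Q) lam n
          (insE v j (n + 1 - n)
            (muF (⇑d) (⇑Q) lam (n + 1 - n) (fun i => v (j + i)) (fun i => p (j + i))))
          (insP p j (n + 1 - n)
            (((n + 1 - n : ℕ) : ZMod 2) + ∑ i ∈ Finset.range (n + 1 - n), p (j + i)))) = PS2 := by
    rw [hPS2def]
    have e4 : n + 1 - n = 1 := by omega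
    refine Finset.sum_congr rfl fun j hj => ?_
    rw [e4, muF_one, hmu n (by omega)]
    have eE : insE v j 1 (d ((fun i => v (j + i)) 0)) = Function.update v j (d (v j)) := by
      funext i
      by_cases h2 : i = j
      · subst h2; simp [insE, Function.update]
      · by_cases h1 : i < j
        · simp [insE, Function.update, h1, h2]
        · simp [insE, Function.update, h1, h2]
    have eP : insP p j 1 (((1 : ℕ) : ZMod 2) + ∑ i ∈ Finset.range 1, p (j + i))
        = Function.update p j (p j + 1) := by
      funext i
      by_cases h2 : i = j
      · subst h2; simp [insP, Function.update, Finset.sum_range_one, add_comm]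
      · by_cases h1 : i < j
        · simp [insP, Function.update, h1, h2]
        · simp [insP, Function.update, h1, h2]
    rw [eE, eP]
    congr 2
    have hc : ((n - 1 : ℕ) : ZMod 2) = (n : ZMod 2) - 1 := by
      rw [Nat.cast_sub (by omega : 1 ≤ n)]; norm_num
    rw [hc]
    push_cast
    ring
  rw [hT2]
  -- the middle block
  have hTmid : (∑ k ∈ Finset.Icc 2 (n - 1), ∑ j ∈ Finset.range k,
      sgn (((n + 1 - k : ℕ) : ZMod 2) * psum p j
          + (j : ZMod 2) * (((n + 1 - k : ℕ) : ZMod 2) - 1)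
          + ((k : ZMod 2) - 1) * ((n + 1 - k : ℕ) : ZMod 2)) *
        muF (⇑d) (⇑Q) lam k
          (insE v j (n + 1 - k)
            (muF (⇑d) (⇑Q) lam (n + 1 - k) (fun i => v (j + i)) (fun i => p (j + i))))
          (insP p j (n + 1 - k)
            (((n + 1 - k : ℕ) : ZMod 2) + ∑ i ∈ Finset.range (n + 1 - k), p (j + i))))
      = PPhi - PS3 := by
    rw [hPPhidef, hPS3def, ← Finset.sum_sub_distrib]
    refine Finset.sum_congr rfl fun k hk => ?_
    rw [← Finset.sum_sub_distrib]
    refine Finset.sum_congr rfl fun j hj => ?_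
    simp only [Finset.mem_Icc] at hk
    simp only [Finset.mem_range] at hj
    have hk1 : k ≠ 1 := by omega
    have hl1 : n + 1 - k ≠ 1 := by omega
    rw [hmu _ hl1, hmu _ hk1]
    have hPop : ∀ x : A, P x = x - (d (Q x) + Q (d x)) := fun x => (hP x).symm
    rw [hPop (lam (n + 1 - k) (fun i => v (j + i)) (fun i => p (j + i)))]
    rw [lam_insE_sub Q lam hlam2 hlamrec k (by omega) j (by omega), map_sub, mul_sub]
  rw [hTmid]
  abel
end

section
/- For every n ≥ 3 and all homogeneous v₁,…,v_n ∈ V the following cancellation identity holds: −∑_{k+l=n+1, k,l≥2} (−1)^{l+k(|v₁|+⋯+|v_l|)} λ_l(v₁,…,v_l)·[Qλ_{k−1}(v_{l+1},…,v_n)] + ∑_{k+l=n+1, k,l≥2} (−1)^{l(|v₁|+⋯+|v_{k−1}|)} [Qλ_{k−1}(v₁,…,v_{k−1})]·λ_l(v_k,…,v_n) = 0, where the terms with k = 2 are interpreted via the convention Qλ₁ := −Id. -/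
/-!
Expanding `λ_l` in the first sum and `λ_{n+1-k}` in the second by the defining recursion (which,
thanks to `Qλ₁ = -Id`, also holds for `λ₂`), both sums become sums over the ways of cutting
`v₁, …, vₙ` into three nonempty blocks, of `±Qλ(block₁)·Qλ(block₂)·Qλ(block₃)`: the first sum is
indexed by the second cut point, the second one by the first. By associativity the products agree,
and a computation in `ℤ/2` shows that so do the signs.
-/

open Finset

theorem sgn_add {A : Type*} [Ring A] (x y : ZMod 2) : (sgn (x + y) : A) = sgn x * sgn y := by
  rw [sgn, sgn, sgn, ZMod.val_add, ← neg_one_pow_eq_pow_mod_two, pow_add]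

theorem sgn_commute {A : Type*} [Ring A] (x : ZMod 2) (y : A) : Commute (sgn x) y :=
  (Commute.neg_one_left y).pow_left _

theorem psum_shift (p : ℕ → ZMod 2) (a b : ℕ) :
    psum (fun i => p (a + i)) b = psum p (a + b) - psum p a := by
  rw [psum, psum, psum, sum_range_add]
  abel

theorem parity_exponent_eq {n i b : ℕ} (h : i + b ≤ n) (x y : ZMod 2) :
    ((i + b : ℕ) : ZMod 2) + ((n + 1 - (i + b) : ℕ) : ZMod 2) * y + (i + ((b : ZMod 2) - 1) * x) =
      ((n - i : ℕ) : ZMod 2) * x + (b + (((n - (i + b) : ℕ) : ZMod 2) - 1) * (y - x)) := by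
  push_cast [Nat.cast_sub h, Nat.cast_sub (by omega : i ≤ n), Nat.cast_sub (by omega : i + b ≤ n + 1)]
  ring_nf
  reduce_mod_char

theorem sum_Icc_sum_Icc_reindex_cuts {M : Type*} [AddCommMonoid M] (n : ℕ) (f : ℕ → ℕ → M) :
    ∑ l ∈ Icc 2 (n - 1), ∑ a ∈ Icc 1 (l - 1), f a l =
      ∑ k ∈ Icc 2 (n - 1), ∑ b ∈ Icc 1 (n - k), f (k - 1) (k - 1 + b) := by
  rw [sum_sigma', sum_sigma']
  refine sum_nbij' (fun x => ⟨x.2 + 1, x.1 - x.2⟩) (fun y => ⟨y.1 - 1 + y.2, y.1 - 1⟩)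
    ?_ ?_ ?_ ?_ ?_ <;> rintro ⟨x, y⟩ h <;> simp only [mem_sigma, mem_Icc] at h ⊢
  · omega
  · omega
  · congr; omega
  · rw [Nat.sub_add_cancel (by omega : 1 ≤ x), Nat.add_sub_cancel_left]
  · rw [Nat.add_sub_cancel, Nat.add_sub_cancel' (by omega : y ≤ x)]

section

variable {A : Type*} [Ring A] (Q : A → A) (lam : ℕ → (ℕ → A) → (ℕ → ZMod 2) → A)

def splittingSum (m : ℕ) (v : ℕ → A) (p : ℕ → ZMod 2) : A :=
  ∑ k ∈ Icc 1 (m - 1), sgn ((k : ZMod 2) + (((m - k : ℕ) : ZMod 2) - 1) * psum p k) *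
    (Qlam Q lam k v p * Qlam Q lam (m - k) (fun i => v (k + i)) (fun i => p (k + i)))

theorem lam_eq_neg_splittingSum (hlam2 : ∀ v p, lam 2 v p = v 0 * v 1)
    (hlamrec : ∀ m, 3 ≤ m → ∀ v p, lam m v p = -splittingSum Q lam m v p)
    {m : ℕ} (hm : 2 ≤ m) (v : ℕ → A) (p : ℕ → ZMod 2) :
    lam m v p = -splittingSum Q lam m v p := by
  obtain rfl | hm := hm.eq_or_lt
  · simp [splittingSum, hlam2, Qlam, sgn, show (1 : ZMod 2).val = 1 from rfl]
  · exact hlamrec m hm v p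

variable {Q lam}

theorem sgn_mul_lam_mul {l : ℕ} {v : ℕ → A} {p : ℕ → ZMod 2}
    (h : lam l v p = -splittingSum Q lam l v p) (s : ZMod 2) (w : A) :
    sgn s * (lam l v p * w) = -∑ a ∈ Icc 1 (l - 1),
      sgn (s + ((a : ZMod 2) + (((l - a : ℕ) : ZMod 2) - 1) * psum p a)) *
        (Qlam Q lam a v p * (Qlam Q lam (l - a) (fun i => v (a + i)) (fun i => p (a + i)) * w)) := by
  simp only [h, splittingSum, neg_mul, mul_neg, sum_mul, mul_sum, sgn_add, mul_assoc]

theorem sgn_mul_mul_lam {m : ℕ} {v : ℕ → A} {p : ℕ → ZMod 2}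
    (h : lam m v p = -splittingSum Q lam m v p) (s : ZMod 2) (w : A) :
    sgn s * (w * lam m v p) = -∑ b ∈ Icc 1 (m - 1),
      sgn (s + ((b : ZMod 2) + (((m - b : ℕ) : ZMod 2) - 1) * psum p b)) *
        (w * (Qlam Q lam b v p * Qlam Q lam (m - b) (fun i => v (b + i)) (fun i => p (b + i)))) := by
  simp only [h, splittingSum, mul_neg, mul_sum, sgn_add, mul_assoc, (sgn_commute _ w).left_comm]

end

theorem cancellation_identity_general {K A : Type*} [Field K] [Ring A] [Algebra K A]
    -- `Q` is an odd linear operator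
    (Q : A →ₗ[K] A)
    -- `λ₂(v₁,v₂) = v₁·v₂` and, recursively, `λ_n(v₁,…,v_n) =
    -- -∑ (-1)^{k+(l-1)(|v₁|+⋯+|v_k|)} [Qλ_k(v₁,…,v_k)]·[Qλ_l(v_{k+1},…,v_n)]`
    -- for `n ≥ 3`, with `Qλ₁ := -Id`; here the sum runs over all splittings
    -- `(v₁,…,v_k), (v_{k+1},…,v_n)` with `k, l ≥ 1` (so `l = n - k`, matching
    -- the arities in the paper's explicit formulae for `λ₃, λ₄, λ₅`)
    (lam : ℕ → (ℕ → A) → (ℕ → ZMod 2) → A)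
    (hlam2 : ∀ (v : ℕ → A) (p : ℕ → ZMod 2), lam 2 v p = v 0 * v 1)
    (hlamrec : ∀ n, 3 ≤ n → ∀ (v : ℕ → A) (p : ℕ → ZMod 2),
      lam n v p =
        - ∑ k ∈ Finset.Icc 1 (n - 1),
            sgn ((k : ZMod 2) + (((n - k : ℕ) : ZMod 2) - 1) * psum p k) *
              (Qlam (⇑Q) lam k v p *
                Qlam (⇑Q) lam (n - k) (fun i => v (k + i)) (fun i => p (k + i))))
    (n : ℕ) (v : ℕ → A) (p : ℕ → ZMod 2) :
    - (∑ l ∈ Finset.Icc 2 (n - 1),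
        sgn ((l : ZMod 2) + ((n + 1 - l : ℕ) : ZMod 2) * psum p l) *
          (lam l v p *
            Qlam (⇑Q) lam (n - l) (fun i => v (l + i)) (fun i => p (l + i))))
    + ∑ k ∈ Finset.Icc 2 (n - 1),
        sgn (((n + 1 - k : ℕ) : ZMod 2) * psum p (k - 1)) *
          (Qlam (⇑Q) lam (k - 1) v p *
            lam (n + 1 - k) (fun i => v (k - 1 + i)) (fun i => p (k - 1 + i)))
    = 0 := by
  have hrec : ∀ m, 2 ≤ m → ∀ v p, lam m v p = -splittingSum Q lam m v p :=
    fun m hm => lam_eq_neg_splittingSum Q lam hlam2 hlamrec hm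
  -- the term of the splitting of `v₁, …, vₙ` into three blocks at the cut points `a < l`
  let cutTerm : ℕ → ℕ → A := fun a l =>
    sgn ((l : ZMod 2) + ((n + 1 - l : ℕ) : ZMod 2) * psum p l +
        ((a : ZMod 2) + (((l - a : ℕ) : ZMod 2) - 1) * psum p a)) *
      (Qlam Q lam a v p * (Qlam Q lam (l - a) (fun i => v (a + i)) (fun i => p (a + i)) *
        Qlam Q lam (n - l) (fun i => v (l + i)) (fun i => p (l + i))))
  rw [neg_add_eq_zero]
  calc _ = -∑ l ∈ Icc 2 (n - 1), ∑ a ∈ Icc 1 (l - 1), cutTerm a l := by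
        rw [← sum_neg_distrib]
        exact sum_congr rfl fun l hl => sgn_mul_lam_mul (hrec l (mem_Icc.1 hl).1 v p) _ _
    _ = -∑ k ∈ Icc 2 (n - 1), ∑ b ∈ Icc 1 (n - k), cutTerm (k - 1) (k - 1 + b) := by
        rw [sum_Icc_sum_Icc_reindex_cuts]
    _ = _ := by
        rw [← sum_neg_distrib]
        refine sum_congr rfl fun k hk => ?_
        rw [mem_Icc] at hk
        obtain ⟨i, rfl⟩ : ∃ i, k = i + 1 := ⟨k - 1, by omega⟩
        rw [sgn_mul_mul_lam (hrec _ (by omega) _ _), Nat.add_sub_cancel,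
          show n + 1 - (i + 1) - 1 = n - (i + 1) by omega]
        congr 1
        refine sum_congr rfl fun b hb => ?_
        have hib : i + b ≤ n := by rw [mem_Icc] at hb; omega
        simp only [cutTerm]
        rw [Nat.add_sub_cancel_left, show n + 1 - (i + 1) = n - i by omega,
          show n - i - b = n - (i + b) by omega, psum_shift, parity_exponent_eq hib]
        simp only [add_assoc]

/-- the cancellation identity from the proof of Lemma 1: for
every `n ≥ 3` and all homogeneous `v₁, …, v_n ∈ V`,
`-∑_{k+l=n+1, k,l≥2} (-1)^{l+k(|v₁|+⋯+|v_l|)} λ_l(v₁,…,v_l)·[Qλ_{k-1}(v_{l+1},…,v_n)]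
 +∑_{k+l=n+1, k,l≥2} (-1)^{l(|v₁|+⋯+|v_{k-1}|)} [Qλ_{k-1}(v₁,…,v_{k-1})]·λ_l(v_k,…,v_n) = 0`,
where the `k = 2` terms are interpreted via `Qλ₁ := -Id`. -/
theorem cancellation_identity {K A : Type*} [Field K] [Ring A] [Algebra K A]
    -- `A` is a superalgebra over `K`: a ℤ/2-graded associative algebra
    (𝒜 : ZMod 2 → Submodule K A) [GradedAlgebra 𝒜]
    -- `Q` is an odd linear operator
    (Q : A →ₗ[K] A)
    (hQ : ∀ (i : ZMod 2), ∀ x ∈ 𝒜 i, Q x ∈ 𝒜 (i + 1))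
    -- `λ₂(v₁,v₂) = v₁·v₂` and, recursively, `λ_n(v₁,…,v_n) =
    -- -∑ (-1)^{k+(l-1)(|v₁|+⋯+|v_k|)} [Qλ_k(v₁,…,v_k)]·[Qλ_l(v_{k+1},…,v_n)]`
    -- for `n ≥ 3`, with `Qλ₁ := -Id`; here the sum runs over all splittings
    -- `(v₁,…,v_k), (v_{k+1},…,v_n)` with `k, l ≥ 1` (so `l = n - k`, matching
    -- the arities in the paper's explicit formulae for `λ₃, λ₄, λ₅`)
    (lam : ℕ → (ℕ → A) → (ℕ → ZMod 2) → A)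
    (hlam2 : ∀ (v : ℕ → A) (p : ℕ → ZMod 2), lam 2 v p = v 0 * v 1)
    (hlamrec : ∀ n, 3 ≤ n → ∀ (v : ℕ → A) (p : ℕ → ZMod 2),
      lam n v p =
        - ∑ k ∈ Finset.Icc 1 (n - 1),
            sgn ((k : ZMod 2) + (((n - k : ℕ) : ZMod 2) - 1) * psum p k) *
              (Qlam (⇑Q) lam k v p *
                Qlam (⇑Q) lam (n - k) (fun i => v (k + i)) (fun i => p (k + i))))
    (n : ℕ) (hn : 3 ≤ n) (v : ℕ → A) (p : ℕ → ZMod 2)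
    -- `v₁, …, v_n` are homogeneous, `v_i` of parity `p_i`
    (hv : ∀ i < n, v i ∈ 𝒜 (p i)) :
    - (∑ l ∈ Finset.Icc 2 (n - 1),
        sgn ((l : ZMod 2) + ((n + 1 - l : ℕ) : ZMod 2) * psum p l) *
          (lam l v p *
            Qlam (⇑Q) lam (n - l) (fun i => v (l + i)) (fun i => p (l + i))))
    + ∑ k ∈ Finset.Icc 2 (n - 1),
        sgn (((n + 1 - k : ℕ) : ZMod 2) * psum p (k - 1)) *
          (Qlam (⇑Q) lam (k - 1) v p *
            lam (n + 1 - k) (fun i => v (k - 1 + i)) (fun i => p (k - 1 + i)))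
    = 0 :=
  cancellation_identity_general Q lam hlam2 hlamrec n v p
end
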